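/- arXiv:1105.5430 — 7 statements merged into one kernel-verified Lean document; each statement's English description precedes it below -/
import Mathlib

section
/- For every γ ∈ (0,1] there exists a constant c > 0 such that for every integer n ≥ 1 and every continuously differentiable function v : [−1,1] → ℝ with v(−1) = v(1) = 0, one has ∫_{−1}^1 ( v′(x)² + (nπ)² |x|^{2γ} v(x)² ) dx ≥ c · n^{2/(1+γ)} · ∫_{−1}^1 v(x)² dx. (Lower bound for the first eigenvalue λ_{n,γ} of the operator A_{n,γ} v = −v″ + (nπ)² |x|^{2γ} v with Dirichlet boundary conditions on (−1,1), expressed through its Rayleigh-quotient characterization.) -/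
/-!
Completing the square with any C¹ function `w` gives
`v'² + V v² = (v' + w v)² - (w v²)' + (w' + V - w²) v²`, and `∫ (w v²)' = 0` for `v` vanishing
at the endpoints; so a lower bound `m ≤ w' + V - w²` (a Riccati inequality) bounds the Rayleigh
quotient below by `m`. For `V = A² |x|^(2γ)` and `B = A^(1/(1+γ))` we take
`w(x) = (B/16) arctan (B x)`: on `|x| ≤ 1/B` the derivative `w' ≥ B²/32` wins, while on
`|x| ≥ 1/B` the potential is already at least `B²`, and always `w² ≤ B²/64`. Hence
`λ_{n,γ} ≥ B²/64 = (nπ)^(2/(1+γ))/64`.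
-/

open MeasureTheory Set

theorem setIntegral_sq_deriv_add_mul_sq_ge_of_riccati {a b m : ℝ} {v v' w w' V : ℝ → ℝ}
    (hab : a ≤ b) (hv : ∀ x ∈ Icc a b, HasDerivWithinAt v (v' x) (Icc a b) x)
    (hv' : ContinuousOn v' (Icc a b)) (hw : ∀ x ∈ Icc a b, HasDerivWithinAt w (w' x) (Icc a b) x)
    (hw' : ContinuousOn w' (Icc a b)) (hV : ContinuousOn V (Icc a b)) (hva : v a = 0)
    (hvb : v b = 0) (hm : ∀ x ∈ Icc a b, m ≤ w' x + V x - w x ^ 2) :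
    m * ∫ x in Ioo a b, v x ^ 2 ≤ ∫ x in Ioo a b, (v' x ^ 2 + V x * v x ^ 2) := by
  have hvc : ContinuousOn v (Icc a b) := fun x hx => (hv x hx).continuousWithinAt
  have hwc : ContinuousOn w (Icc a b) := fun x hx => (hw x hx).continuousWithinAt
  set F' : ℝ → ℝ := fun x => w' x * v x ^ 2 + 2 * w x * v x * v' x
  have hF'c : ContinuousOn F' (Icc a b) :=
    (hw'.mul (hvc.pow 2)).add (((continuousOn_const.mul hwc).mul hvc).mul hv')
  have hF'_zero : ∫ x in Ioo a b, F' x = 0 := by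
    have hderiv : ∀ x ∈ Ioo a b, HasDerivAt (fun y => w y * v y ^ 2) (F' x) x := by
      intro x hx
      have hx' := Ioo_subset_Icc_self hx
      refine (((hw x hx').mul ((hv x hx').pow 2)).hasDerivAt (Icc_mem_nhds hx.1 hx.2)).congr_deriv ?_
      simp only [F', Pi.pow_apply, Nat.cast_ofNat]
      ring
    rw [← integral_Ioc_eq_integral_Ioo, ← intervalIntegral.integral_of_le hab,
      intervalIntegral.integral_eq_sub_of_hasDerivAt_of_le hab (hwc.mul (hvc.pow 2)) hderiv
        (hF'c.intervalIntegrable_of_Icc hab)]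
    simp [hva, hvb]
  have hint : ∀ {f : ℝ → ℝ}, ContinuousOn f (Icc a b) → IntegrableOn f (Ioo a b) :=
    fun hf => hf.integrableOn_Icc.mono_set Ioo_subset_Icc_self
  have hv2 : IntegrableOn (fun x => v x ^ 2) (Ioo a b) := hint (hvc.pow 2)
  calc m * ∫ x in Ioo a b, v x ^ 2 = ∫ x in Ioo a b, (m * v x ^ 2 - F' x) := by
        rw [integral_sub (hv2.const_mul m) (hint hF'c), hF'_zero, sub_zero, integral_const_mul]
    _ ≤ ∫ x in Ioo a b, (v' x ^ 2 + V x * v x ^ 2) := by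
        refine setIntegral_mono_on ((hv2.const_mul m).sub (hint hF'c))
          (hint ((hv'.pow 2).add (hV.mul (hvc.pow 2)))) measurableSet_Ioo fun x hx => ?_
        have hgap := mul_nonneg (sub_nonneg.2 (hm x (Ioo_subset_Icc_self hx))) (sq_nonneg (v x))
        nlinarith [sq_nonneg (v' x + w x * v x)]

theorem sq_le_rpow_one_add_sq_mul_abs_rpow {B γ x : ℝ} (hB : 0 ≤ B) (hγ : 0 ≤ γ)
    (hx : 1 ≤ B * |x|) : B ^ 2 ≤ (B ^ (1 + γ)) ^ 2 * |x| ^ (2 * γ) := by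
  have hBx : 1 ≤ (B * |x|) ^ γ := Real.one_le_rpow hx hγ
  have hsplit : (B ^ (1 + γ)) ^ 2 * |x| ^ (2 * γ) = (B * (B * |x|) ^ γ) ^ 2 := by
    rw [Real.rpow_add' hB (by positivity), Real.rpow_one, Real.mul_rpow hB (abs_nonneg x),
      mul_comm 2 γ, Real.rpow_mul (abs_nonneg x), Real.rpow_two]
    ring
  rw [hsplit]
  gcongr
  exact le_mul_of_one_le_right hB hBx

theorem hasDerivAt_div_sixteen_mul_arctan_mul (B x : ℝ) :
    HasDerivAt (fun x => B / 16 * Real.arctan (B * x)) (B ^ 2 / 16 / (1 + (B * x) ^ 2)) x := by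
  refine (((hasDerivAt_id x).const_mul B).arctan.const_mul (B / 16)).congr_deriv ?_
  simp only [id, mul_one]
  ring

theorem riccati_arctan_ge {B : ℝ} {V : ℝ → ℝ} (hV₀ : ∀ x, 0 ≤ V x)
    (hV : ∀ x, 1 ≤ |B * x| → B ^ 2 ≤ V x) (x : ℝ) :
    B ^ 2 / 64 ≤ B ^ 2 / 16 / (1 + (B * x) ^ 2) + V x - (B / 16 * Real.arctan (B * x)) ^ 2 := by
  have harctan : Real.arctan (B * x) ^ 2 ≤ 4 := by
    have := Real.arctan_lt_pi_div_two (B * x)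
    have := Real.neg_pi_div_two_lt_arctan (B * x)
    nlinarith [Real.pi_lt_four]
  have hw : (B / 16 * Real.arctan (B * x)) ^ 2 ≤ B ^ 2 / 64 := by
    rw [mul_pow]; nlinarith [sq_nonneg B]
  have hderiv₀ : 0 ≤ B ^ 2 / 16 / (1 + (B * x) ^ 2) := by positivity
  rcases le_or_gt 1 |B * x| with hout | hin
  · linarith [hV x hout, sq_nonneg B]
  · have hden : 1 + (B * x) ^ 2 ≤ 2 := by nlinarith [sq_abs (B * x), abs_nonneg (B * x)]
    have : B ^ 2 / 32 ≤ B ^ 2 / 16 / (1 + (B * x) ^ 2) := by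
      rw [le_div_iff₀ (by positivity)]; nlinarith [sq_nonneg B]
    linarith [hV₀ x]

/-- Lower bound `λ_{n,γ} ≥ c n^(2/(1+γ))` for the first Dirichlet eigenvalue of
`A_{n,γ} v = -v'' + (nπ)² |x|^(2γ) v` on `(-1,1)`, expressed through the
Rayleigh-quotient characterization over C¹ test functions vanishing at `±1`. -/
theorem first_eigenvalue_lower_bound (γ : ℝ) (hγ : γ ∈ Set.Ioc (0 : ℝ) 1) :
    ∃ c > 0, ∀ n : ℕ, 1 ≤ n → ∀ v v' : ℝ → ℝ,
      (∀ x ∈ Set.Icc (-1 : ℝ) 1, HasDerivWithinAt v (v' x) (Set.Icc (-1 : ℝ) 1) x) →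
      ContinuousOn v' (Set.Icc (-1 : ℝ) 1) →
      v (-1) = 0 → v 1 = 0 →
      (∫ x in Set.Ioo (-1 : ℝ) 1,
          ((v' x) ^ 2 + ((n : ℝ) * Real.pi) ^ 2 * |x| ^ (2 * γ) * (v x) ^ 2))
        ≥ c * (n : ℝ) ^ ((2 : ℝ) / (1 + γ)) * ∫ x in Set.Ioo (-1 : ℝ) 1, (v x) ^ 2 := by
  obtain ⟨hγ₀, -⟩ := hγ
  refine ⟨1 / 64, by norm_num, fun n _ v v' hv hv' hva hvb => ?_⟩
  set A : ℝ := n * Real.pi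
  have hA : 0 ≤ A := by positivity
  set B : ℝ := A ^ (1 + γ)⁻¹
  have hB : 0 ≤ B := Real.rpow_nonneg hA _
  have hBA : B ^ (1 + γ) = A := Real.rpow_inv_rpow hA (by linarith)
  have hV : ∀ x, 1 ≤ |B * x| → B ^ 2 ≤ A ^ 2 * |x| ^ (2 * γ) := fun x hx => hBA ▸
    sq_le_rpow_one_add_sq_mul_abs_rpow hB hγ₀.le (by rwa [abs_mul, abs_of_nonneg hB] at hx)
  have hbound := setIntegral_sq_deriv_add_mul_sq_ge_of_riccati (m := B ^ 2 / 64)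
    (V := fun x => A ^ 2 * |x| ^ (2 * γ)) (by norm_num) hv hv'
    (fun x _ => (hasDerivAt_div_sixteen_mul_arctan_mul B x).hasDerivWithinAt)
    (continuous_const.div (by fun_prop) fun x => by positivity).continuousOn
    ((continuous_abs.rpow_const fun _ => Or.inr (by positivity)).const_mul _).continuousOn hva hvb
    fun x _ => riccati_arctan_ge (fun x => by positivity) hV x
  have hnB : (n : ℝ) ^ ((2 : ℝ) / (1 + γ)) ≤ B ^ 2 := by
    rw [← Real.rpow_mul_natCast hA, Real.mul_rpow (by positivity) Real.pi_pos.le]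
    have h2 : (1 + γ)⁻¹ * ((2 : ℕ) : ℝ) = 2 / (1 + γ) := by push_cast; ring
    rw [h2]
    exact le_mul_of_one_le_right (by positivity)
      (Real.one_le_rpow (by linarith [Real.pi_gt_three]) (by positivity))
  calc 1 / 64 * (n : ℝ) ^ ((2 : ℝ) / (1 + γ)) * ∫ x in Ioo (-1 : ℝ) 1, v x ^ 2
      ≤ B ^ 2 / 64 * ∫ x in Ioo (-1 : ℝ) 1, v x ^ 2 := by
        refine mul_le_mul_of_nonneg_right (by linarith) ?_
        exact setIntegral_nonneg measurableSet_Ioo fun x _ => sq_nonneg _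
    _ ≤ _ := hbound
end

section
/- For every γ > 0 there exists a constant c > 0 such that for every integer n ≥ 1 there exists a Lipschitz function v : [−1,1] → ℝ which is not identically zero, satisfies v(−1) = v(1) = 0, is continuously differentiable except at finitely many points, and satisfies ∫_{−1}^1 ( v′(x)² + (nπ)² |x|^{2γ} v(x)² ) dx ≤ c · n^{2/(1+γ)} · ∫_{−1}^1 v(x)² dx. (Upper bound λ_{n,γ} ≤ c n^{2/(1+γ)} for the first Dirichlet eigenvalue of A_{n,γ} via its Rayleigh-quotient characterization; a suitable test function is the hat function v(x) = max(0, 1 − k|x|) with k of order n^{1/(γ+1)}.) -/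
/-!
The hat function `v(x) = max(1 - k|x|, 0)` is a valid test function. On its support
`[-k⁻¹, k⁻¹]` one has `v'² ≤ k²` and `|x|^(2γ) v² ≤ k^(-2γ)`, so the energy is at most
`2k⁻¹ (k² + (nπ)² k^(-2γ))`, while `v ≥ 1/2` on `[-(2k)⁻¹, (2k)⁻¹]` gives `∫ v² ≥ (4k)⁻¹`.
The choice `k = n^(1/(1+γ))`, i.e. `k^(1+γ) = n`, balances the two terms:
`n² k^(-2γ) = k²`, and the Rayleigh quotient is at most `8 (1 + π²) k² = 8 (1 + π²) n^(2/(1+γ))`.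
-/

open MeasureTheory Set Filter Topology

theorem setIntegral_le_mul_measureReal_of_le_indicator {α : Type*} [MeasurableSpace α]
    {μ : Measure α} {f : α → ℝ} {s t : Set α} {c : ℝ} (ht : MeasurableSet t) (hμt : μ t ≠ ⊤)
    (hc : 0 ≤ c) (hf : ∀ x, f x ≤ t.indicator (fun _ => c) x) :
    ∫ x in s, f x ∂μ ≤ c * μ.real t := by
  by_cases hfs : IntegrableOn f s μ
  · calc ∫ x in s, f x ∂μ ≤ ∫ x in s, t.indicator (fun _ => c) x ∂μ :=
          setIntegral_mono hfs ((integrableOn_const hμt).integrable_indicator ht).integrableOn hf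
      _ = c * (μ.restrict s).real t := by rw [integral_indicator_const c ht, smul_eq_mul, mul_comm]
      _ ≤ c * μ.real t := by
          gcongr
          exact ENNReal.toReal_mono hμt (Measure.restrict_apply_le s t)
  · rw [integral_undef hfs]
    positivity

noncomputable def hat (k x : ℝ) : ℝ := max (1 - k * |x|) 0

/-- The derivative of `hat k` off the kinks `0, ±k⁻¹`; its values at the kinks are arbitrary. -/
noncomputable def hatDeriv (k x : ℝ) : ℝ := if k * |x| < 1 then -k * Real.sign x else 0

section Hat

variable {k x : ℝ}

theorem lipschitzWith_hat (hk : 0 ≤ k) : LipschitzWith k.toNNReal (hat k) := by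
  refine LipschitzWith.of_dist_le_mul fun x y => ?_
  rw [Real.coe_toNNReal k hk, Real.dist_eq, Real.dist_eq]
  calc |hat k x - hat k y| ≤ |(1 - k * |x|) - (1 - k * |y|)| := abs_max_sub_max_le_abs _ _ _
    _ = k * |(|x| - |y|)| := by
        rw [show 1 - k * |x| - (1 - k * |y|) = -(k * (|x| - |y|)) by ring, abs_neg, abs_mul,
          abs_of_nonneg hk]
    _ ≤ k * |x - y| := mul_le_mul_of_nonneg_left (abs_abs_sub_abs_le_abs_sub x y) hk

theorem hat_zero : hat k 0 = 1 := by simp [hat]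

theorem hat_nonneg : 0 ≤ hat k x := le_max_right _ _

theorem hat_eq_zero (h : 1 ≤ k * |x|) : hat k x = 0 := max_eq_right (by linarith)

theorem hatDeriv_eq_zero (h : 1 ≤ k * |x|) : hatDeriv k x = 0 := if_neg h.not_gt

theorem hat_le_one (hk : 0 ≤ k) : hat k x ≤ 1 :=
  max_le (by have := mul_nonneg hk (abs_nonneg x); linarith) zero_le_one

theorem sq_hatDeriv_le : hatDeriv k x ^ 2 ≤ k ^ 2 := by
  unfold hatDeriv
  split_ifs
  · rcases Real.sign_apply_eq x with h | h | h <;> simp [h, sq_nonneg]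
  · simp [sq_nonneg]

theorem hat_locally_affine (hk : 0 < k) (hx : x ∉ ({-k⁻¹, 0, k⁻¹} : Set ℝ)) :
    ∃ b c : ℝ, ∀ᶠ y in 𝓝 x, hat k y = b + c * y ∧ hatDeriv k y = c := by
  simp only [mem_insert_iff, mem_singleton_iff, not_or] at hx
  obtain ⟨hx₁, hx₂, hx₃⟩ := hx
  rcases Ne.lt_or_gt hx₁ with h₁ | h₁
  · refine ⟨0, 0, ?_⟩
    filter_upwards [Iio_mem_nhds h₁] with y hy
    have hy₀ : y < 0 := hy.trans (neg_neg_of_pos (inv_pos.2 hk))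
    have hy₁ : 1 ≤ k * |y| := by
      rw [abs_of_neg hy₀]; nlinarith [mul_inv_cancel₀ hk.ne', mul_lt_mul_of_pos_left hy hk]
    exact ⟨by rw [hat_eq_zero hy₁]; ring, hatDeriv_eq_zero hy₁⟩
  rcases Ne.lt_or_gt hx₂ with h₂ | h₂
  · refine ⟨1, k, ?_⟩
    filter_upwards [Ioo_mem_nhds h₁ h₂] with y hy
    have hy₁ : k * |y| < 1 := by rw [abs_of_neg hy.2]; nlinarith [mul_inv_cancel₀ hk.ne', hy.1]
    refine ⟨max_eq_left ?_ |>.trans ?_, if_pos hy₁ |>.trans ?_⟩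
    · linarith
    · rw [abs_of_neg hy.2]; ring
    · rw [Real.sign_of_neg hy.2]; ring
  rcases Ne.lt_or_gt hx₃ with h₃ | h₃
  · refine ⟨1, -k, ?_⟩
    filter_upwards [Ioo_mem_nhds h₂ h₃] with y hy
    have hy₁ : k * |y| < 1 := by rw [abs_of_pos hy.1]; nlinarith [mul_inv_cancel₀ hk.ne', hy.2]
    refine ⟨max_eq_left ?_ |>.trans ?_, if_pos hy₁ |>.trans ?_⟩
    · linarith
    · rw [abs_of_pos hy.1]; ring
    · rw [Real.sign_of_pos hy.1]; ring
  · refine ⟨0, 0, ?_⟩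
    filter_upwards [Ioi_mem_nhds h₃] with y hy
    have hy₀ : 0 < y := (inv_pos.2 hk).trans hy
    have hy₁ : 1 ≤ k * |y| := by
      rw [abs_of_pos hy₀]; nlinarith [mul_inv_cancel₀ hk.ne', mul_lt_mul_of_pos_left hy hk]
    exact ⟨by rw [hat_eq_zero hy₁]; ring, hatDeriv_eq_zero hy₁⟩

theorem hasDerivAt_hat (hk : 0 < k) (hx : x ∉ ({-k⁻¹, 0, k⁻¹} : Set ℝ)) :
    HasDerivAt (hat k) (hatDeriv k x) x := by
  obtain ⟨b, c, h⟩ := hat_locally_affine hk hx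
  rw [h.self_of_nhds.2]
  simpa using ((hasDerivAt_id x).const_mul c |>.const_add b).congr_of_eventuallyEq
    (h.mono fun y hy => hy.1)

theorem continuousAt_hatDeriv (hk : 0 < k) (hx : x ∉ ({-k⁻¹, 0, k⁻¹} : Set ℝ)) :
    ContinuousAt (hatDeriv k) x := by
  obtain ⟨b, c, h⟩ := hat_locally_affine hk hx
  exact continuousAt_const.congr (h.mono fun y hy => hy.2.symm)

variable {a γ : ℝ}

theorem hat_energy_density_le (hk : 0 < k) (ha : 0 ≤ a) (hγ : 0 ≤ γ) (x : ℝ) :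
    hatDeriv k x ^ 2 + a * |x| ^ (2 * γ) * hat k x ^ 2 ≤
      (Icc (-k⁻¹) k⁻¹).indicator (fun _ => k ^ 2 + a * k⁻¹ ^ (2 * γ)) x := by
  by_cases hx : |x| ≤ k⁻¹
  · rw [indicator_of_mem (show x ∈ Icc (-k⁻¹) k⁻¹ from abs_le.1 hx)]
    have hpot : |x| ^ (2 * γ) ≤ k⁻¹ ^ (2 * γ) := by gcongr
    have hhat : hat k x ^ 2 ≤ 1 := pow_le_one₀ hat_nonneg (hat_le_one hk.le)
    have := mul_le_mul hpot hhat (sq_nonneg _) (by positivity)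
    nlinarith [sq_hatDeriv_le (k := k) (x := x)]
  · have hx' : 1 ≤ k * |x| := ((inv_lt_iff_one_lt_mul₀' hk).1 (not_le.1 hx)).le
    rw [indicator_of_notMem (s := Icc (-k⁻¹) k⁻¹) fun h => hx (abs_le.2 h), hat_eq_zero hx',
      hatDeriv_eq_zero hx']
    simp

theorem setIntegral_hat_energy_le (hk : 0 < k) (ha : 0 ≤ a) (hγ : 0 ≤ γ) (s : Set ℝ) :
    ∫ x in s, (hatDeriv k x ^ 2 + a * |x| ^ (2 * γ) * hat k x ^ 2) ≤
      (k ^ 2 + a * k⁻¹ ^ (2 * γ)) * (2 * k⁻¹) := by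
  calc _ ≤ (k ^ 2 + a * k⁻¹ ^ (2 * γ)) * volume.real (Icc (-k⁻¹) k⁻¹) :=
        setIntegral_le_mul_measureReal_of_le_indicator measurableSet_Icc measure_Icc_lt_top.ne
          (by positivity) (hat_energy_density_le hk ha hγ)
    _ = _ := by rw [Real.volume_real_Icc_of_le (by simp [hk.le])]; ring

theorem inv_four_mul_le_integral_sq_hat (hk : 1 ≤ k) :
    (4 * k)⁻¹ ≤ ∫ x in Ioo (-1) 1, hat k x ^ 2 := by
  have hk₀ : 0 < k := by linarith
  set r := (2 * k)⁻¹ with hr_def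
  have hr₀ : 0 < r := by positivity
  have hr₁ : r < 1 := by rw [hr_def, inv_lt_one₀ (by positivity)]; linarith
  have hcont : Continuous fun x => hat k x ^ 2 := (lipschitzWith_hat hk₀.le).continuous.pow 2
  have hhalf : ∀ x ∈ Icc (-r) r, 4⁻¹ ≤ hat k x ^ 2 := by
    intro x hx
    have hkx : k * |x| ≤ 2⁻¹ := by
      calc k * |x| ≤ k * r := mul_le_mul_of_nonneg_left (abs_le.2 hx) hk₀.le
        _ = 2⁻¹ := by rw [hr_def]; field_simp
    have : 2⁻¹ ≤ hat k x := le_max_of_le_left (by linarith)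
    nlinarith
  calc (4 * k)⁻¹ = 4⁻¹ * volume.real (Icc (-r) r) := by
        rw [Real.volume_real_Icc_of_le (by linarith), hr_def]; field_simp; ring
    _ ≤ ∫ x in Icc (-r) r, hat k x ^ 2 :=
        setIntegral_ge_of_const_le_real measurableSet_Icc measure_Icc_lt_top.ne hhalf
          hcont.integrableOn_Icc
    _ ≤ ∫ x in Ioo (-1) 1, hat k x ^ 2 :=
        setIntegral_mono_set (hcont.integrableOn_Icc.mono_set Ioo_subset_Icc_self)
          (.of_forall fun _ => sq_nonneg _) (Icc_subset_Ioo (by linarith) hr₁).eventuallyLE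

end Hat

theorem sq_mul_inv_rpow_eq_sq {n k γ : ℝ} (hk : 0 < k) (hkn : k ^ (1 + γ) = n) :
    n ^ 2 * k⁻¹ ^ (2 * γ) = k ^ 2 := by
  rw [← hkn, Real.inv_rpow hk.le, ← Real.rpow_natCast, ← Real.rpow_mul hk.le,
    ← Real.rpow_neg hk.le, ← Real.rpow_add hk, ← Real.rpow_natCast]
  congr 1
  push_cast
  ring

/-- Upper bound `λ_{n,γ} ≤ c n^(2/(1+γ))` for the first Dirichlet eigenvalue of
`A_{n,γ} v = -v'' + (nπ)² |x|^(2γ) v` on `(-1,1)`, via a Lipschitz test function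
(continuously differentiable except at finitely many points) in the
Rayleigh-quotient characterization. -/
theorem first_eigenvalue_upper_bound (γ : ℝ) (hγ : 0 < γ) :
    ∃ c > 0, ∀ n : ℕ, 1 ≤ n →
      ∃ (v v' : ℝ → ℝ) (K : NNReal) (s : Finset ℝ),
        LipschitzOnWith K v (Set.Icc (-1 : ℝ) 1) ∧
        (∃ x ∈ Set.Icc (-1 : ℝ) 1, v x ≠ 0) ∧
        v (-1) = 0 ∧ v 1 = 0 ∧
        (∀ x ∈ Set.Ioo (-1 : ℝ) 1 \ (s : Set ℝ), HasDerivAt v (v' x) x) ∧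
        ContinuousOn v' (Set.Ioo (-1 : ℝ) 1 \ (s : Set ℝ)) ∧
        (∫ x in Set.Ioo (-1 : ℝ) 1,
            ((v' x) ^ 2 + ((n : ℝ) * Real.pi) ^ 2 * |x| ^ (2 * γ) * (v x) ^ 2))
          ≤ c * (n : ℝ) ^ ((2 : ℝ) / (1 + γ)) * ∫ x in Set.Ioo (-1 : ℝ) 1, (v x) ^ 2 := by
  refine ⟨8 * (1 + Real.pi ^ 2), by positivity, fun n hn => ?_⟩
  set k := (n : ℝ) ^ (1 + γ)⁻¹
  have hk₁ : 1 ≤ k := Real.one_le_rpow (by exact_mod_cast hn) (by positivity)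
  have hk₀ : 0 < k := by linarith
  have hkn : k ^ (1 + γ) = n := Real.rpow_inv_rpow n.cast_nonneg (by positivity)
  have hk₂ : k ^ 2 = (n : ℝ) ^ ((2 : ℝ) / (1 + γ)) := by
    rw [← Real.rpow_natCast, ← Real.rpow_mul n.cast_nonneg]
    ring_nf
  have hend : ∀ x : ℝ, |x| = 1 → hat k x = 0 := fun x hx =>
    hat_eq_zero (by rwa [hx, mul_one])
  refine ⟨hat k, hatDeriv k, k.toNNReal, {-k⁻¹, 0, k⁻¹},
    (lipschitzWith_hat hk₀.le).lipschitzOnWith, ⟨0, by norm_num, by simp [hat_zero]⟩,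
    hend _ (by norm_num), hend _ (by norm_num),
    fun x hx => hasDerivAt_hat hk₀ (by simpa using hx.2),
    fun x hx => (continuousAt_hatDeriv hk₀ (by simpa using hx.2)).continuousWithinAt, ?_⟩
  calc _ ≤ (k ^ 2 + (n * Real.pi) ^ 2 * k⁻¹ ^ (2 * γ)) * (2 * k⁻¹) :=
        setIntegral_hat_energy_le hk₀ (sq_nonneg _) (by positivity) _
    _ = 8 * (1 + Real.pi ^ 2) * k ^ 2 * (4 * k)⁻¹ := by
        rw [mul_pow, mul_right_comm, sq_mul_inv_rpow_eq_sq hk₀ hkn]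
        field_simp
        ring
    _ ≤ _ := by
        rw [hk₂]
        gcongr
        exact inv_four_mul_le_integral_sq_hat hk₁
end

section
/- Let γ ∈ (0,1] and α ∈ (0,1]. Then for every continuously differentiable function v : [0,1] → ℝ, γ · ∫₀^α v(x)² dx ≤ α · v(α)² + ∫₀^1 ( α² v′(x)² + (x/α)^{2γ} v(x)² ) dx. -/
open MeasureTheory Set

/-- First step of the eigenvalue lower bound: for `γ ∈ (0,1]` and `α ∈ (0,1]`,
`γ ∫₀^α v² ≤ α v(α)² + ∫₀^1 (α² v'² + (x/α)^(2γ) v²)` for C¹ functions `v` on `[0,1]`. -/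
theorem eigenvalue_lower_bound_first_step
    (γ α : ℝ) (hγ : γ ∈ Set.Ioc (0 : ℝ) 1) (hα : α ∈ Set.Ioc (0 : ℝ) 1)
    (v v' : ℝ → ℝ)
    (hv : ∀ x ∈ Set.Icc (0 : ℝ) 1, HasDerivWithinAt v (v' x) (Set.Icc (0 : ℝ) 1) x)
    (hv' : ContinuousOn v' (Set.Icc (0 : ℝ) 1)) :
    γ * ∫ x in Set.Ioo (0 : ℝ) α, (v x) ^ 2
      ≤ α * (v α) ^ 2
        + ∫ x in Set.Ioo (0 : ℝ) 1, (α ^ 2 * (v' x) ^ 2 + (x / α) ^ (2 * γ) * (v x) ^ 2) := by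
  obtain ⟨hγ0, hγ1⟩ := hγ
  obtain ⟨hα0, hα1⟩ := hα
  have hvc : ContinuousOn v (Icc 0 1) := fun x hx => (hv x hx).continuousWithinAt
  set g : ℝ → ℝ := fun x => (x / α) ^ (2 * γ) with hgdef
  have hgc : Continuous g := by
    apply Continuous.rpow_const (by continuity)
    intro x; right; positivity
  have hsub : Icc (0:ℝ) α ⊆ Icc 0 1 := Icc_subset_Icc le_rfl hα1
  -- continuity of the big integrand
  have hbigc : ContinuousOn (fun x => α ^ 2 * (v' x) ^ 2 + g x * (v x) ^ 2) (Icc 0 1) := by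
    exact (continuousOn_const.mul (hv'.pow 2)).add
      (hgc.continuousOn.mul (hvc.pow 2))
  have hbigint : IntegrableOn (fun x => α ^ 2 * (v' x) ^ 2 + g x * (v x) ^ 2) (Icc 0 1) :=
    hbigc.integrableOn_Icc
  have hbigint1 : IntegrableOn (fun x => α ^ 2 * (v' x) ^ 2 + g x * (v x) ^ 2) (Ioo 0 1) :=
    hbigint.mono_set Ioo_subset_Icc_self
  have hbigintα : IntegrableOn (fun x => α ^ 2 * (v' x) ^ 2 + g x * (v x) ^ 2) (Ioo 0 α) :=
    hbigint.mono_set (Ioo_subset_Icc_self.trans hsub)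
  have hv2int : IntegrableOn (fun x => (v x) ^ 2) (Ioo 0 α) :=
    ((hvc.pow 2).mono hsub).integrableOn_Icc.mono_set Ioo_subset_Icc_self
  have hDint : IntegrableOn (fun x => 2 * x * v x * v' x) (Ioo 0 α) := by
    have : ContinuousOn (fun x => 2 * x * v x * v' x) (Icc 0 α) :=
      ((continuousOn_const.mul continuousOn_id).mul (hvc.mono hsub)).mul (hv'.mono hsub)
    exact this.integrableOn_Icc.mono_set Ioo_subset_Icc_self
  -- FTC: ∫₀^α (v² + 2 x v v') = α v(α)²
  have hFTC : (∫ x in Ioo (0:ℝ) α, (v x) ^ 2) + (∫ x in Ioo (0:ℝ) α, 2 * x * v x * v' x)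
      = α * (v α) ^ 2 := by
    have key : ∫ x in (0:ℝ)..α, ((v x) ^ 2 + 2 * x * v x * v' x)
        = α * (v α) ^ 2 - 0 * (v 0) ^ 2 := by
      apply intervalIntegral.integral_eq_sub_of_hasDeriv_right_of_le hα0.le
      · exact (continuousOn_id.mul ((hvc.mono hsub).pow 2)).congr (fun x hx => rfl)
      · intro x hx
        have hx1 : x ∈ Ioo (0:ℝ) 1 := ⟨hx.1, lt_of_lt_of_le hx.2 hα1⟩
        have hmem : Icc (0:ℝ) 1 ∈ nhds x := Icc_mem_nhds hx1.1 hx1.2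
        have hda : HasDerivAt v (v' x) x := (hv x (Ioo_subset_Icc_self hx1)).hasDerivAt hmem
        have : HasDerivAt (fun x => x * (v x) ^ 2)
            (1 * (v x) ^ 2 + x * (2 * v x ^ 1 * v' x)) x :=
          (hasDerivAt_id x).mul (hda.pow 2)
        have h2 : HasDerivAt (fun x => x * (v x) ^ 2) ((v x) ^ 2 + 2 * x * v x * v' x) x := by
          convert this using 1; ring
        exact h2.hasDerivWithinAt
      · apply ContinuousOn.intervalIntegrable
        rw [uIcc_of_le hα0.le]
        exact ((hvc.mono hsub).pow 2).add
          (((continuousOn_const.mul continuousOn_id).mul (hvc.mono hsub)).mul (hv'.mono hsub))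
    rw [intervalIntegral.integral_of_le hα0.le, MeasureTheory.integral_Ioc_eq_integral_Ioo] at key
    rw [← MeasureTheory.integral_add hv2int hDint]
    linarith [key]
  -- pointwise bound on (0,α)
  have hpt : ∀ x ∈ Ioo (0:ℝ) α, -(2 * x * v x * v' x)
      ≤ α ^ 2 * (v' x) ^ 2 + g x * (v x) ^ 2 := by
    intro x hx
    have hx0 : 0 < x := hx.1
    have hxα : x < α := hx.2
    have hy0 : 0 < x / α := div_pos hx0 hα0
    have hy1 : x / α ≤ 1 := (div_le_one hα0).mpr hxα.le
    have ht : (x / α) ^ (2:ℝ) ≤ g x :=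
      Real.rpow_le_rpow_of_exponent_ge hy0 hy1 (by linarith)
    rw [Real.rpow_two] at ht
    have ht2 : (x / α) ^ 2 * (v x) ^ 2 ≤ g x * (v x) ^ 2 :=
      mul_le_mul_of_nonneg_right ht (sq_nonneg _)
    have key : α ^ 2 * (v' x) ^ 2 + (x / α) ^ 2 * (v x) ^ 2 + 2 * x * v x * v' x
        = (α * v' x + (x / α) * v x) ^ 2 := by
      field_simp
      ring
    linarith [sq_nonneg (α * v' x + (x / α) * v x), ht2, key]
  -- step 2 : ∫ Ioo 0 α v² ≤ α v(α)² + B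
  have hstep2 : (∫ x in Ioo (0:ℝ) α, (v x) ^ 2)
      ≤ α * (v α) ^ 2 + ∫ x in Ioo (0:ℝ) α, (α ^ 2 * (v' x) ^ 2 + g x * (v x) ^ 2) := by
    have hmono : (∫ x in Ioo (0:ℝ) α, -(2 * x * v x * v' x))
        ≤ ∫ x in Ioo (0:ℝ) α, (α ^ 2 * (v' x) ^ 2 + g x * (v x) ^ 2) := by
      apply setIntegral_mono_on hDint.neg hbigintα measurableSet_Ioo hpt
    rw [MeasureTheory.integral_neg] at hmono
    linarith
  -- step 3 : B ≤ C
  have hstep3 : (∫ x in Ioo (0:ℝ) α, (α ^ 2 * (v' x) ^ 2 + g x * (v x) ^ 2))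
      ≤ ∫ x in Ioo (0:ℝ) 1, (α ^ 2 * (v' x) ^ 2 + g x * (v x) ^ 2) := by
    apply setIntegral_mono_set hbigint1
    · filter_upwards [self_mem_ae_restrict (measurableSet_Ioo : MeasurableSet (Ioo (0:ℝ) 1))]
        with x hx
      have hg0 : 0 ≤ g x := Real.rpow_nonneg (div_nonneg hx.1.le hα0.le) _
      have : 0 ≤ g x * (v x) ^ 2 := mul_nonneg hg0 (sq_nonneg _)
      positivity
    · exact HasSubset.Subset.eventuallyLE (Ioo_subset_Ioo le_rfl hα1)
  -- step 1 : γ A ≤ A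
  have hA0 : 0 ≤ ∫ x in Ioo (0:ℝ) α, (v x) ^ 2 :=
    setIntegral_nonneg measurableSet_Ioo (fun x _ => sq_nonneg _)
  nlinarith [hstep2, hstep3, hA0]
end

section
/- Let γ > 0 and α ∈ (0,1]. Then for every continuously differentiable function v : [0,1] → ℝ, α · v(α)² ≤ 2(2γ+1) · ∫₀^α (x/α)^{2γ} v(x)² dx + (1/(γ+1)) · ∫₀^α α² v′(x)² dx. -/
/-!
With `t = x / α`, the function `α t^(2γ+1) v(x)²` vanishes at `0` and equals `α v(α)²` at `α`,
so `α v(α)²` is the integral over `(0, α)` of its derivative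
`(2γ+1) t^(2γ) v² + α t^(2γ+1) · 2 v v'`. The cross term is split by AM-GM as
`2 (t^γ v)(α t^(γ+1) v') ≤ (2γ+1) t^(2γ) v² + α² t^(2γ+2) v'² / (2γ+1)`, and `t ≤ 1`,
`γ + 1 ≤ 2γ + 1` bound the last term by `α² v'² / (γ+1)`.
-/

open MeasureTheory Set

lemma mul_two_mul_le_of_sq_le_one {γ s t a b : ℝ} (hγ : 0 ≤ γ) (hs₀ : 0 ≤ s) (hs₁ : s ≤ 1)
    (ht : t ^ 2 ≤ 1) :
    s * t * (2 * a * b) ≤ (2 * γ + 1) * (s * a ^ 2) + 1 / (γ + 1) * b ^ 2 := by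
  have amgm : 2 * a * (t * b) ≤ (2 * γ + 1) * a ^ 2 + (t * b) ^ 2 / (2 * γ + 1) := by
    have hsq : (2 * γ + 1) * a ^ 2 + (t * b) ^ 2 / (2 * γ + 1) - 2 * a * (t * b)
        = ((2 * γ + 1) * a - t * b) ^ 2 / (2 * γ + 1) := by
      field_simp; ring
    have : 0 ≤ ((2 * γ + 1) * a - t * b) ^ 2 / (2 * γ + 1) := by positivity
    linarith
  have htb : (t * b) ^ 2 / (2 * γ + 1) ≤ b ^ 2 / (γ + 1) := by
    rw [mul_pow]
    gcongr
    · nlinarith [sq_nonneg b]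
    · linarith
  calc s * t * (2 * a * b) = s * (2 * a * (t * b)) := by ring
    _ ≤ s * ((2 * γ + 1) * a ^ 2 + b ^ 2 / (γ + 1)) := by gcongr; linarith
    _ ≤ (2 * γ + 1) * (s * a ^ 2) + 1 / (γ + 1) * b ^ 2 := by
      have : s * (b ^ 2 / (γ + 1)) ≤ b ^ 2 / (γ + 1) :=
        mul_le_of_le_one_left (by positivity) hs₁
      rw [one_div_mul_eq_div]
      linarith

lemma hasDerivAt_mul_div_rpow_mul_sq {q α x d : ℝ} {v : ℝ → ℝ} (hq : 0 ≤ q) (hα : α ≠ 0)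
    (hv : HasDerivAt v d x) :
    HasDerivAt (fun y => α * (y / α) ^ (q + 1) * v y ^ 2)
      ((q + 1) * (x / α) ^ q * v x ^ 2 + α * (x / α) ^ (q + 1) * (2 * v x * d)) x := by
  have hpow : HasDerivAt (fun y => (y / α) ^ (q + 1)) (α⁻¹ * (q + 1) * (x / α) ^ q) x := by
    simpa using ((hasDerivAt_id x).div_const α).rpow_const (p := q + 1) (Or.inr (by linarith))
  have hsq : HasDerivAt (fun y => v y ^ 2) (2 * v x * d) x := by
    simpa using hv.fun_pow 2
  refine ((hpow.const_mul α).mul hsq).congr_deriv ?_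
  field_simp

lemma continuous_div_rpow_const {α q : ℝ} (hq : 0 ≤ q) : Continuous fun x : ℝ => (x / α) ^ q :=
  (Real.continuous_rpow_const hq).comp (continuous_id.div_const α)

lemma continuousOn_deriv_mul_div_rpow_mul_sq {q α : ℝ} {v v' : ℝ → ℝ} {s : Set ℝ} (hq : 0 ≤ q)
    (hv : ContinuousOn v s) (hv' : ContinuousOn v' s) :
    ContinuousOn (fun x =>
      (q + 1) * (x / α) ^ q * v x ^ 2 + α * (x / α) ^ (q + 1) * (2 * v x * v' x)) s := by
  have h₁ := (continuous_div_rpow_const (α := α) hq).continuousOn (s := s)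
  have h₂ := (continuous_div_rpow_const (α := α) (by linarith : 0 ≤ q + 1)).continuousOn (s := s)
  fun_prop

lemma mul_sq_eq_integral_Ioo {q α : ℝ} {v v' : ℝ → ℝ} (hq : 0 ≤ q) (hα : 0 < α)
    (hv : ∀ x ∈ Ioo 0 α, HasDerivAt v (v' x) x) (hvc : ContinuousOn v (Icc 0 α))
    (hv'c : ContinuousOn v' (Icc 0 α)) :
    α * v α ^ 2 = ∫ x in Ioo 0 α,
      ((q + 1) * (x / α) ^ q * v x ^ 2 + α * (x / α) ^ (q + 1) * (2 * v x * v' x)) := by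
  have hcont : ContinuousOn (fun x => α * (x / α) ^ (q + 1) * v x ^ 2) (Icc 0 α) :=
    (continuousOn_const.mul (continuous_div_rpow_const (by linarith)).continuousOn).mul (hvc.pow 2)
  have hint : IntervalIntegrable (fun x =>
      (q + 1) * (x / α) ^ q * v x ^ 2 + α * (x / α) ^ (q + 1) * (2 * v x * v' x)) volume 0 α := by
    refine ContinuousOn.intervalIntegrable ?_
    rw [uIcc_of_le hα.le]
    exact continuousOn_deriv_mul_div_rpow_mul_sq hq hvc hv'c
  rw [integral_Ioc_eq_integral_Ioo.symm, ← intervalIntegral.integral_of_le hα.le,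
    intervalIntegral.integral_eq_sub_of_hasDerivAt_of_le hα.le hcont
      (fun x hx => hasDerivAt_mul_div_rpow_mul_sq hq hα.ne' (hv x hx)) hint]
  simp [Real.zero_rpow (by linarith : q + 1 ≠ 0), hα.ne']

lemma deriv_mul_div_rpow_mul_sq_le {γ α x a b : ℝ} (hγ : 0 ≤ γ) (hα : 0 < α) (hx₀ : 0 ≤ x)
    (hx : x ≤ α) :
    (2 * γ + 1) * (x / α) ^ (2 * γ) * a ^ 2 + α * (x / α) ^ (2 * γ + 1) * (2 * a * b)
      ≤ 2 * (2 * γ + 1) * ((x / α) ^ (2 * γ) * a ^ 2) + 1 / (γ + 1) * (α ^ 2 * b ^ 2) := by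
  have ht₀ : 0 ≤ x / α := div_nonneg hx₀ hα.le
  have ht₁ : x / α ≤ 1 := (div_le_one hα).2 hx
  have key := mul_two_mul_le_of_sq_le_one (s := (x / α) ^ (2 * γ)) (a := a) (b := α * b) hγ
    (Real.rpow_nonneg ht₀ _) (Real.rpow_le_one ht₀ ht₁ (by positivity)) (pow_le_one₀ ht₀ ht₁)
  rw [Real.rpow_add_one' ht₀ (by positivity)]
  linear_combination key

/-- Second step of the eigenvalue lower bound: for `γ > 0` and `α ∈ (0,1]`,
`α v(α)² ≤ 2(2γ+1) ∫₀^α (x/α)^(2γ) v² + (1/(γ+1)) ∫₀^α α² v'²` for C¹ functions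
`v` on `[0,1]`. -/
theorem eigenvalue_lower_bound_second_step
    (γ α : ℝ) (hγ : 0 < γ) (hα : α ∈ Set.Ioc (0 : ℝ) 1)
    (v v' : ℝ → ℝ)
    (hv : ∀ x ∈ Set.Icc (0 : ℝ) 1, HasDerivWithinAt v (v' x) (Set.Icc (0 : ℝ) 1) x)
    (hv' : ContinuousOn v' (Set.Icc (0 : ℝ) 1)) :
    α * (v α) ^ 2
      ≤ 2 * (2 * γ + 1) * (∫ x in Set.Ioo (0 : ℝ) α, (x / α) ^ (2 * γ) * (v x) ^ 2)
        + (1 / (γ + 1)) * ∫ x in Set.Ioo (0 : ℝ) α, α ^ 2 * (v' x) ^ 2 := by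
  obtain ⟨hα₀, hα₁⟩ := hα
  have hsub : Icc 0 α ⊆ Icc (0 : ℝ) 1 := Icc_subset_Icc_right hα₁
  have hvc : ContinuousOn v (Icc 0 α) :=
    fun x hx => (hv x (hsub hx)).continuousWithinAt.mono hsub
  have hv'c : ContinuousOn v' (Icc 0 α) := hv'.mono hsub
  have hderiv : ∀ x ∈ Ioo 0 α, HasDerivAt v (v' x) x := fun x hx =>
    (hv x (hsub (Ioo_subset_Icc_self hx))).hasDerivAt (Icc_mem_nhds hx.1 (hx.2.trans_le hα₁))
  have hi₁ : IntegrableOn (fun x => (x / α) ^ (2 * γ) * v x ^ 2) (Ioo 0 α) :=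
    ((continuous_div_rpow_const (by positivity)).continuousOn.mul (hvc.pow 2))
    |>.integrableOn_Icc.mono_set Ioo_subset_Icc_self
  have hi₂ : IntegrableOn (fun x => α ^ 2 * v' x ^ 2) (Ioo 0 α) :=
    (continuousOn_const.mul (hv'c.pow 2)).integrableOn_Icc.mono_set Ioo_subset_Icc_self
  rw [mul_sq_eq_integral_Ioo (by positivity : 0 ≤ 2 * γ) hα₀ hderiv hvc hv'c, ← integral_const_mul,
    ← integral_const_mul, ← integral_add (hi₁.const_mul _) (hi₂.const_mul _)]
  refine setIntegral_mono_on ?_ ((hi₁.const_mul _).add (hi₂.const_mul _)) measurableSet_Ioo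
    fun x hx => deriv_mul_div_rpow_mul_sq_le hγ.le hα₀ hx.1.le hx.2.le
  exact (continuousOn_deriv_mul_div_rpow_mul_sq (by positivity) hvc hv'c).integrableOn_Icc.mono_set
    Ioo_subset_Icc_self
end

section
/- For every γ ∈ (0,1] there exists a constant c₁ > 0 such that for every α ∈ (0,1] and every continuously differentiable function v : [0,1] → ℝ, ∫₀^1 v(x)² dx ≤ c₁ · ∫₀^1 ( α² v′(x)² + (x/α)^{2γ} v(x)² ) dx. -/
/-!
On `[α, 1]` the weight `(x/α)^(2γ)` is at least `1`, so only `∫₀^α v²` needs work. There,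
`v(x)² - v(y)² = ∫ 2 v v'` and `2|v v'| ≤ 2α v'² + v²/(2α)` give
`v(x)² ≤ v(y)² + 2α ∫₀^α v'² + (1/(2α)) ∫₀^α v²`; integrating in `x` over `[0, α]` and then
averaging `y` over `[α/2, α]`, where the weight is at least `4^(-γ) ≥ 1/4`, yields
`∫₀^α v² ≤ 16 ∫ (x/α)^(2γ) v² + 4α² ∫ v'²`, hence the constant `c₁ = 17`.
-/

open MeasureTheory Set intervalIntegral

theorem abs_sub_le_integral_abs_deriv {f f' : ℝ → ℝ} {a b x y : ℝ}
    (hf : ∀ t ∈ Icc a b, HasDerivWithinAt f (f' t) (Icc a b) t)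
    (hf' : ContinuousOn f' (Icc a b)) (hx : x ∈ Icc a b) (hy : y ∈ Icc a b) :
    |f y - f x| ≤ ∫ t in a..b, |f' t| := by
  wlog hxy : x ≤ y generalizing x y
  · rw [abs_sub_comm]
    exact this hy hx (le_of_not_ge hxy)
  have hsub : Icc x y ⊆ Icc a b := Icc_subset_Icc hx.1 hy.2
  have hftc : ∫ t in x..y, f' t = f y - f x :=
    integral_eq_sub_of_hasDeriv_right_of_le hxy
      (fun t ht => (hf t (hsub ht)).continuousWithinAt.mono hsub)
      (fun t ht => ((hf t (hsub (Ioo_subset_Icc_self ht))).hasDerivAt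
        (Icc_mem_nhds (hx.1.trans_lt ht.1) (ht.2.trans_le hy.2))).hasDerivWithinAt)
      ((hf'.mono hsub).intervalIntegrable_of_Icc hxy)
  rw [← hftc]
  calc |∫ t in x..y, f' t| ≤ ∫ t in x..y, |f' t| := abs_integral_le_integral_abs hxy
    _ ≤ ∫ t in a..b, |f' t| :=
      integral_mono_interval hx.1 hxy hy.2 (ae_of_all _ fun _ => abs_nonneg _)
        (hf'.abs.intervalIntegrable_of_Icc (hx.1.trans (hxy.trans hy.2)))

theorem abs_two_mul_mul_le {ε : ℝ} (hε : 0 < ε) (s t : ℝ) :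
    |2 * s * t| ≤ ε * t ^ 2 + ε⁻¹ * s ^ 2 := by
  rw [← mul_le_mul_iff_of_pos_left hε, mul_add, ← mul_assoc, ← mul_assoc, mul_inv_cancel₀ hε.ne',
    abs_mul, abs_mul, abs_two]
  nlinarith [sq_nonneg (ε * |t| - |s|), sq_abs s, sq_abs t]

section DerivBounds

variable {v v' : ℝ → ℝ} {a b : ℝ}

theorem sq_le_sq_add_integral_deriv_sq {x y ε : ℝ} (hε : 0 < ε)
    (hv : ∀ t ∈ Icc a b, HasDerivWithinAt v (v' t) (Icc a b) t)
    (hv' : ContinuousOn v' (Icc a b)) (hx : x ∈ Icc a b) (hy : y ∈ Icc a b) :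
    v x ^ 2 ≤ v y ^ 2 + (ε * ∫ t in a..b, v' t ^ 2) + ε⁻¹ * ∫ t in a..b, v t ^ 2 := by
  have hab : a ≤ b := hx.1.trans hx.2
  have hvc : ContinuousOn v (Icc a b) := fun t ht => (hv t ht).continuousWithinAt
  have hsq : ∀ t ∈ Icc a b, HasDerivWithinAt (fun s => v s ^ 2) (2 * v t * v' t) (Icc a b) t :=
    fun t ht => by simpa using (hv t ht).fun_pow 2
  have hv2 : IntervalIntegrable (fun t => v t ^ 2) volume a b :=
    (hvc.pow 2).intervalIntegrable_of_Icc hab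
  have hv'2 : IntervalIntegrable (fun t => v' t ^ 2) volume a b :=
    (hv'.pow 2).intervalIntegrable_of_Icc hab
  have hfund := abs_sub_le_integral_abs_deriv hsq ((continuousOn_const.mul hvc).mul hv') hy hx
  have hamgm : ∫ t in a..b, |2 * v t * v' t| ≤ ∫ t in a..b, (ε * v' t ^ 2 + ε⁻¹ * v t ^ 2) :=
    integral_mono_on hab
      (((continuousOn_const.mul hvc).mul hv').abs.intervalIntegrable_of_Icc hab)
      ((hv'2.const_mul ε).add (hv2.const_mul ε⁻¹)) (fun t _ => abs_two_mul_mul_le hε _ _)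
  rw [integral_add (hv'2.const_mul ε) (hv2.const_mul ε⁻¹), intervalIntegral.integral_const_mul,
    intervalIntegral.integral_const_mul] at hamgm
  linarith [le_abs_self (v x ^ 2 - v y ^ 2), abs_sub_comm (v x ^ 2) (v y ^ 2)]

theorem integral_sq_le_sq_add_integral_deriv_sq {y : ℝ} (hab : a < b)
    (hv : ∀ t ∈ Icc a b, HasDerivWithinAt v (v' t) (Icc a b) t)
    (hv' : ContinuousOn v' (Icc a b)) (hy : y ∈ Icc a b) :
    ∫ t in a..b, v t ^ 2 ≤ 2 * (b - a) * v y ^ 2 + 4 * (b - a) ^ 2 * ∫ t in a..b, v' t ^ 2 := by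
  set A := ∫ t in a..b, v' t ^ 2
  set B := ∫ t in a..b, v t ^ 2
  have hL : 0 < 2 * (b - a) := by linarith
  have hvc : ContinuousOn v (Icc a b) := fun t ht => (hv t ht).continuousWithinAt
  -- with `ε = 2 (b - a)`, integrating in `x` returns only `B / 2` on the right
  have hint : B ≤ ∫ _ in a..b, (v y ^ 2 + 2 * (b - a) * A + (2 * (b - a))⁻¹ * B) :=
    integral_mono_on hab.le ((hvc.pow 2).intervalIntegrable_of_Icc hab.le) intervalIntegrable_const
      fun x hx => sq_le_sq_add_integral_deriv_sq hL hv hv' hx hy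
  rw [intervalIntegral.integral_const, smul_eq_mul] at hint
  have hB : (b - a) * ((2 * (b - a))⁻¹ * B) = B / 2 := by
    field_simp [(sub_pos.2 hab).ne']
  nlinarith

theorem integral_sq_le_integral_sq_right_add_integral_deriv_sq {c : ℝ} (hac : a ≤ c) (hcb : c < b)
    (hv : ∀ t ∈ Icc a b, HasDerivWithinAt v (v' t) (Icc a b) t)
    (hv' : ContinuousOn v' (Icc a b)) :
    ∫ t in a..b, v t ^ 2 ≤
      2 * (b - a) / (b - c) * (∫ t in c..b, v t ^ 2) + 4 * (b - a) ^ 2 * ∫ t in a..b, v' t ^ 2 := by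
  set A := ∫ t in a..b, v' t ^ 2
  set B := ∫ t in a..b, v t ^ 2
  have hvc : ContinuousOn v (Icc c b) :=
    fun t ht => (hv t ⟨hac.trans ht.1, ht.2⟩).continuousWithinAt.mono (Icc_subset_Icc_left hac)
  have hv2 : IntervalIntegrable (fun t => v t ^ 2) volume c b :=
    (hvc.pow 2).intervalIntegrable_of_Icc hcb.le
  have hint : ∫ _ in c..b, B ≤ ∫ y in c..b, (2 * (b - a) * v y ^ 2 + 4 * (b - a) ^ 2 * A) :=
    integral_mono_on hcb.le intervalIntegrable_const
      ((hv2.const_mul _).add intervalIntegrable_const)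
      fun y hy => integral_sq_le_sq_add_integral_deriv_sq (hac.trans_lt hcb) hv hv'
        ⟨hac.trans hy.1, hy.2⟩
  rw [intervalIntegral.integral_const, smul_eq_mul, integral_add
    (hv2.const_mul _) intervalIntegrable_const,
    intervalIntegral.integral_const_mul, intervalIntegral.integral_const, smul_eq_mul] at hint
  rw [div_mul_eq_mul_div, ← sub_le_iff_le_add, le_div_iff₀ (sub_pos.2 hcb)]
  linarith

theorem integral_sq_zero_one_le_of_scale {α : ℝ} (hα0 : 0 < α) (hα1 : α ≤ 1)
    (hv : ∀ x ∈ Icc (0 : ℝ) 1, HasDerivWithinAt v (v' x) (Icc 0 1) x)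
    (hv' : ContinuousOn v' (Icc 0 1)) :
    ∫ x in (0 : ℝ)..1, v x ^ 2 ≤ 4 * (∫ x in (α / 2)..α, v x ^ 2) + (∫ x in α..1, v x ^ 2) +
      4 * α ^ 2 * ∫ x in (0 : ℝ)..1, v' x ^ 2 := by
  have hvc : ContinuousOn v (Icc 0 1) := fun t ht => (hv t ht).continuousWithinAt
  have hnear : ∫ x in (0 : ℝ)..α, v x ^ 2 ≤
      4 * (∫ x in (α / 2)..α, v x ^ 2) + 4 * α ^ 2 * ∫ x in (0 : ℝ)..α, v' x ^ 2 := by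
    have h := integral_sq_le_integral_sq_right_add_integral_deriv_sq (by positivity)
      (by linarith : α / 2 < α) (fun t ht => (hv t ⟨ht.1, ht.2.trans hα1⟩).mono
        (Icc_subset_Icc_right hα1)) (hv'.mono (Icc_subset_Icc_right hα1))
    rwa [show 2 * (α - 0) / (α - α / 2) = 4 by field_simp; ring, sub_zero] at h
  have hderiv_le : ∫ x in (0 : ℝ)..α, v' x ^ 2 ≤ ∫ x in (0 : ℝ)..1, v' x ^ 2 :=
    integral_mono_interval le_rfl hα0.le hα1 (ae_of_all _ fun _ => sq_nonneg _)
      ((hv'.pow 2).intervalIntegrable_of_Icc zero_le_one)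
  have hv2 : ContinuousOn (fun x => v x ^ 2) (Icc 0 1) := hvc.pow 2
  rw [← integral_add_adjacent_intervals
    ((hv2.mono (Icc_subset_Icc_right hα1)).intervalIntegrable_of_Icc hα0.le)
    ((hv2.mono (Icc_subset_Icc_left hα0.le)).intervalIntegrable_of_Icc hα1)]
  nlinarith [mul_le_mul_of_nonneg_left hderiv_le (sq_nonneg α)]

end DerivBounds

theorem integral_sq_le_seventeen_mul_weighted {v v' w : ℝ → ℝ} {α : ℝ} (hα0 : 0 < α)
    (hα1 : α ≤ 1) (hw : ContinuousOn w (Icc 0 1)) (hw0 : ∀ x ∈ Icc (0 : ℝ) 1, 0 ≤ w x)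
    (hw_half : ∀ x ∈ Icc (α / 2) α, 1 / 4 ≤ w x) (hw_one : ∀ x ∈ Icc α 1, 1 ≤ w x)
    (hv : ∀ x ∈ Icc (0 : ℝ) 1, HasDerivWithinAt v (v' x) (Icc 0 1) x)
    (hv' : ContinuousOn v' (Icc 0 1)) :
    ∫ x in (0 : ℝ)..1, v x ^ 2 ≤ 17 * ∫ x in (0 : ℝ)..1, (α ^ 2 * v' x ^ 2 + w x * v x ^ 2) := by
  have hvc : ContinuousOn v (Icc 0 1) := fun t ht => (hv t ht).continuousWithinAt
  have hv2 : IntervalIntegrable (fun x => v x ^ 2) volume 0 1 :=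
    (hvc.pow 2).intervalIntegrable_of_Icc zero_le_one
  have hv'2 : IntervalIntegrable (fun x => v' x ^ 2) volume 0 1 :=
    (hv'.pow 2).intervalIntegrable_of_Icc zero_le_one
  have hwv2 : IntervalIntegrable (fun x => w x * v x ^ 2) volume 0 1 :=
    (hw.mul (hvc.pow 2)).intervalIntegrable_of_Icc zero_le_one
  have hwv2_nonneg : 0 ≤ᵐ[volume.restrict (Ioc 0 1)] fun x => w x * v x ^ 2 :=
    (ae_restrict_mem measurableSet_Ioc).mono fun x hx =>
      mul_nonneg (hw0 x (Ioc_subset_Icc_self hx)) (sq_nonneg _)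
  have hsub : ∀ {c d : ℝ}, c ∈ Icc (0 : ℝ) 1 → d ∈ Icc (0 : ℝ) 1 → uIcc c d ⊆ uIcc 0 1 :=
    fun hc hd => by
      rw [uIcc_of_le zero_le_one]
      exact uIcc_subset_Icc hc hd
  have hα : α ∈ Icc (0 : ℝ) 1 := ⟨hα0.le, hα1⟩
  have hα2 : α / 2 ∈ Icc (0 : ℝ) 1 := ⟨by positivity, by linarith⟩
  have h1 : (1 : ℝ) ∈ Icc (0 : ℝ) 1 := ⟨zero_le_one, le_rfl⟩
  have hmid : ∫ x in (α / 2)..α, v x ^ 2 ≤ 4 * ∫ x in (α / 2)..α, w x * v x ^ 2 := by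
    rw [← intervalIntegral.integral_const_mul]
    exact integral_mono_on (by linarith) (hv2.mono_set (hsub hα2 hα))
      ((hwv2.mono_set (hsub hα2 hα)).const_mul 4) fun x hx => by
        nlinarith [hw_half x hx, sq_nonneg (v x)]
  have hfar : ∫ x in α..1, v x ^ 2 ≤ ∫ x in α..1, w x * v x ^ 2 :=
    integral_mono_on hα1 (hv2.mono_set (hsub hα h1)) (hwv2.mono_set (hsub hα h1)) fun x hx => by
      nlinarith [hw_one x hx, sq_nonneg (v x)]
  have hmid_le : ∫ x in (α / 2)..α, w x * v x ^ 2 ≤ ∫ x in (0 : ℝ)..1, w x * v x ^ 2 :=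
    integral_mono_interval hα2.1 (by linarith) hα1 hwv2_nonneg hwv2
  have hfar_le : ∫ x in α..1, w x * v x ^ 2 ≤ ∫ x in (0 : ℝ)..1, w x * v x ^ 2 :=
    integral_mono_interval hα0.le hα1 le_rfl hwv2_nonneg hwv2
  have hderiv_nonneg : 0 ≤ ∫ x in (0 : ℝ)..1, v' x ^ 2 :=
    intervalIntegral.integral_nonneg zero_le_one fun _ _ => sq_nonneg _
  rw [integral_add (hv'2.const_mul _) hwv2, intervalIntegral.integral_const_mul]
  nlinarith [integral_sq_zero_one_le_of_scale hα0 hα1 hv hv',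
    mul_nonneg (sq_nonneg α) hderiv_nonneg]

theorem one_div_four_le_rpow {t p : ℝ} (ht : 1 / 2 ≤ t) (hp0 : 0 ≤ p) (hp2 : p ≤ 2) :
    1 / 4 ≤ t ^ p :=
  calc (1 : ℝ) / 4 = (1 / 2) ^ (2 : ℝ) := by norm_num
    _ ≤ (1 / 2) ^ p := Real.rpow_le_rpow_of_exponent_ge (by norm_num) (by norm_num) hp2
    _ ≤ t ^ p := Real.rpow_le_rpow (by norm_num) ht hp0

/-- Scaled Hardy-type inequality behind the eigenvalue lower bound: for
`γ ∈ (0,1]` there is `c₁ > 0` such that, for every scale `α ∈ (0,1]` and every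
C¹ function `v` on `[0,1]`, `∫₀^1 v² ≤ c₁ ∫₀^1 (α² v'² + (x/α)^(2γ) v²)`. -/
theorem eigenvalue_lower_bound_scaled_inequality
    (γ : ℝ) (hγ : γ ∈ Set.Ioc (0 : ℝ) 1) :
    ∃ c₁ > 0, ∀ α ∈ Set.Ioc (0 : ℝ) 1, ∀ v v' : ℝ → ℝ,
      (∀ x ∈ Set.Icc (0 : ℝ) 1, HasDerivWithinAt v (v' x) (Set.Icc (0 : ℝ) 1) x) →
      ContinuousOn v' (Set.Icc (0 : ℝ) 1) →
      (∫ x in Set.Ioo (0 : ℝ) 1, (v x) ^ 2)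
        ≤ c₁ * ∫ x in Set.Ioo (0 : ℝ) 1,
            (α ^ 2 * (v' x) ^ 2 + (x / α) ^ (2 * γ) * (v x) ^ 2) := by
  obtain ⟨hγ0, hγ1⟩ := hγ
  refine ⟨17, by norm_num, ?_⟩
  rintro α ⟨hα0, hα1⟩ v v' hv hv'
  have hw : ContinuousOn (fun x : ℝ => (x / α) ^ (2 * γ)) (Icc 0 1) :=
    (continuousOn_id.div_const α).rpow_const fun _ _ => Or.inr (by positivity)
  simp only [← integral_Ioc_eq_integral_Ioo, ← intervalIntegral.integral_of_le zero_le_one]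
  refine integral_sq_le_seventeen_mul_weighted hα0 hα1 hw
    (fun x hx => Real.rpow_nonneg (div_nonneg hx.1 hα0.le) _) (fun x hx => ?_) (fun x hx => ?_)
    hv hv'
  · exact one_div_four_le_rpow (by rw [le_div_iff₀ hα0]; linarith [hx.1]) (by positivity)
      (by linarith)
  · exact Real.one_le_rpow (by rw [le_div_iff₀ hα0]; linarith [hx.1]) (by positivity)
end

section
/- Let γ ≥ 1, let n ≥ 1 be an integer, let λ > 0, and set x₀ := (λ/(nπ)²)^{1/(2γ)}. Let 0 < a < b ≤ 1 with x₀ ≤ a. Let v : [−1,1] → ℝ be twice continuously differentiable, even, nonnegative, with v(1) = 0, ∫_{−1}^1 v(x)² dx = 1, and −v″(x) + ((nπ)² |x|^{2γ} − λ) v(x) = 0 for all x ∈ (−1,1). Let W : [x₀,1] → ℝ be twice continuously differentiable with −W″(x) + ((nπ)² x^{2γ} − λ) W(x) ≥ 0 for all x ∈ (x₀,1), W(1) ≥ 0, and W′(x₀) < −√(x₀) · λ. Then ∫_a^b v(x)² dx ≤ ∫_a^b W(x)² dx. -/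
/-!
Since `v` is even, `v'(0) = 0`; on `[0, x₀]` the potential is nonnegative, so `v'' ≥ -λ v` there
and integrating gives `v'(x₀) ≥ -λ ∫₀^{x₀} v ≥ -λ √x₀`, the last step by AM-GM and `‖v‖₂ = 1`.
Hence `u = W - v` satisfies `u'(x₀) < 0`, `u(1) ≥ 0` and `u'' ≤ ((nπ)² x^{2γ} - λ) u` with a
positive coefficient on `(x₀, 1)`. A negative minimum of `u` can then sit neither at `x₀`
(where `u` decreases), nor at `1`, nor inside (where `u'' ≥ 0` contradicts `u'' ≤ c u < 0`), so
`0 ≤ v ≤ W` on `[a, b]`.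
-/

open MeasureTheory Set Filter Topology

lemma lt_mul_rpow_of_rpow_one_div_lt {c p lam x : ℝ} (hc : 0 < c) (hp : 0 < p) (hlam : 0 ≤ lam)
    (hx : (lam / c) ^ (1 / p) < x) : lam < c * x ^ p := by
  have hx0 : 0 ≤ x := (Real.rpow_nonneg (by positivity) _).trans hx.le
  rwa [one_div, Real.rpow_inv_lt_iff_of_pos (by positivity) hx0 hp, div_lt_iff₀' hc] at hx

lemma hasDerivAt_of_forall_hasDerivWithinAt_Icc {f f' : ℝ → ℝ} {a b x : ℝ}
    (hf : ∀ y ∈ Icc a b, HasDerivWithinAt f (f' y) (Icc a b) y) (hx : x ∈ Ioo a b) :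
    HasDerivAt f (f' x) x :=
  (hf x (Ioo_subset_Icc_self hx)).hasDerivAt (Icc_mem_nhds hx.1 hx.2)

lemma HasDerivAt.eq_zero_of_even {f : ℝ → ℝ} {f' : ℝ} (hf : HasDerivAt f f' 0)
    (heven : ∀ᶠ x in 𝓝 0, f (-x) = f x) : f' = 0 := by
  have hcomp : HasDerivAt (f ∘ Neg.neg) (f' * -1) 0 :=
    HasDerivAt.comp 0 (by simpa using hf) (hasDerivAt_neg 0)
  have hneg : HasDerivAt f (f' * -1) 0 :=
    hcomp.congr_of_eventuallyEq (heven.mono fun _ hx => hx.symm)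
  linarith [hf.unique hneg]

lemma integral_le_sqrt_of_integral_sq_le_one {f : ℝ → ℝ} {a b : ℝ} (hab : a < b)
    (hf : ContinuousOn f (Icc a b)) (hsq : ∫ x in a..b, f x ^ 2 ≤ 1) :
    ∫ x in a..b, f x ≤ √(b - a) := by
  set s := √(b - a)
  have hs : 0 < s := Real.sqrt_pos.2 (sub_pos.2 hab)
  have hs2 : s ^ 2 = b - a := Real.sq_sqrt (sub_pos.2 hab).le
  have hf2 : IntervalIntegrable (fun x => s / 2 * f x ^ 2) volume a b :=
    ((continuousOn_const.mul (hf.pow 2)).intervalIntegrable_of_Icc hab.le)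
  have hamgm : ∀ x ∈ Icc a b, f x ≤ s / 2 * f x ^ 2 + 1 / (2 * s) := fun x _ => by
    have key : s / 2 * f x ^ 2 + 1 / (2 * s) - f x = (s * f x - 1) ^ 2 / (2 * s) := by
      field_simp; ring
    linarith [key ▸ div_nonneg (sq_nonneg (s * f x - 1)) (by positivity : (0 : ℝ) ≤ 2 * s)]
  calc ∫ x in a..b, f x ≤ ∫ x in a..b, (s / 2 * f x ^ 2 + 1 / (2 * s)) :=
        intervalIntegral.integral_mono_on hab.le (hf.intervalIntegrable_of_Icc hab.le)
          (hf2.add intervalIntegrable_const) hamgm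
    _ = s / 2 * (∫ x in a..b, f x ^ 2) + s ^ 2 / (2 * s) := by
        rw [intervalIntegral.integral_add hf2 intervalIntegrable_const,
          intervalIntegral.integral_const_mul, intervalIntegral.integral_const, smul_eq_mul, hs2,
          mul_one_div]
    _ ≤ s / 2 * 1 + s ^ 2 / (2 * s) := by gcongr
    _ = s := by field_simp; ring

lemma neg_sqrt_mul_le_of_deriv_ge {v v' v'' : ℝ → ℝ} {L lam : ℝ} (hL : 0 < L) (hlam : 0 ≤ lam)
    (hv : ContinuousOn v (Icc 0 L)) (hv' : ContinuousOn v' (Icc 0 L))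
    (hv'' : ∀ x ∈ Ioo 0 L, HasDerivAt v' (v'' x) x) (h0 : v' 0 = 0)
    (hge : ∀ x ∈ Ioo 0 L, -lam * v x ≤ v'' x) (hsq : ∫ x in 0..L, v x ^ 2 ≤ 1) :
    -√L * lam ≤ v' L := by
  have hint : ∫ x in 0..L, -lam * v x ≤ v' L - v' 0 :=
    intervalIntegral.integral_le_sub_of_hasDeriv_right_of_le hL.le hv'
      (fun x hx => (hv'' x hx).hasDerivWithinAt) (continuousOn_const.mul hv).integrableOn_Icc hge
  rw [intervalIntegral.integral_const_mul, h0, sub_zero] at hint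
  have hmean := integral_le_sqrt_of_integral_sq_le_one hL hv hsq
  rw [sub_zero] at hmean
  nlinarith [mul_le_mul_of_nonneg_left hmean hlam]

lemma IsLocalMinOn.hasDerivWithinAt_Icc_left_nonneg {u : ℝ → ℝ} {u' a b : ℝ} (hab : a < b)
    (hmin : IsLocalMinOn u (Icc a b) a) (hu : HasDerivWithinAt u u' (Icc a b) a) : 0 ≤ u' := by
  have hcone : b - a ∈ posTangentConeAt (Icc a b) a :=
    sub_mem_posTangentConeAt_of_segment_subset (segment_subset_Icc hab.le)
  have := hmin.hasFDerivWithinAt_nonneg hu.hasFDerivWithinAt hcone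
  rw [ContinuousLinearMap.toSpanSingleton_apply, smul_eq_mul] at this
  exact nonneg_of_mul_nonneg_right this (sub_pos.2 hab)

lemma IsLocalMin.nonneg_of_hasDerivAt_deriv {u u' : ℝ → ℝ} {u'' m : ℝ} (hmin : IsLocalMin u m)
    (hu : ∀ᶠ x in 𝓝 m, HasDerivAt u (u' x) x) (hu' : HasDerivAt u' u'' m) : 0 ≤ u'' := by
  by_contra! hneg
  have h0 : u' m = 0 := hmin.hasDerivAt_eq_zero hu.self_of_nhds
  have hslope : ∀ᶠ x in 𝓝[<] m, slope u' m x < 0 :=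
    ((hasDerivAt_iff_tendsto_slope.mp hu').mono_left (nhdsLT_le_nhdsNE m)).eventually_lt_const
      hneg
  have hleft : ∀ᶠ x in 𝓝[<] m, slope u' m x < 0 ∧ HasDerivAt u (u' x) x ∧ u m ≤ u x :=
    hslope.and ((hu.filter_mono nhdsWithin_le_nhds).and (hmin.filter_mono nhdsWithin_le_nhds))
  obtain ⟨l, hl : l < m, hsub⟩ := mem_nhdsLT_iff_exists_Ioo_subset.mp hleft
  set y := (l + m) / 2
  have hy : y ∈ Ioo l m := ⟨by simp only [y]; linarith, by simp only [y]; linarith⟩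
  have hderiv : ∀ x ∈ Ioc l m, HasDerivAt u (u' x) x := fun x hx =>
    hx.2.eq_or_lt.elim (fun h => h ▸ hu.self_of_nhds) fun h => (hsub ⟨hx.1, h⟩).2.1
  obtain ⟨ξ, hξ, hmvt⟩ := exists_hasDerivAt_eq_slope u u' hy.2
    (fun x hx => (hderiv x ⟨hy.1.trans_le hx.1, hx.2⟩).continuousAt.continuousWithinAt)
    (fun x hx => hderiv x ⟨hy.1.trans hx.1, hx.2.le⟩)
  have hξpos : 0 < u' ξ := by
    have hs := (hsub ⟨hy.1.trans hξ.1, hξ.2⟩).1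
    rw [slope_def_field, h0, sub_zero] at hs
    have hξm : ξ - m < 0 := sub_neg.2 hξ.2
    simpa [div_mul_cancel₀ _ hξm.ne] using mul_pos_of_neg_of_neg hs hξm
  rw [hmvt, div_pos_iff_of_pos_right (sub_pos.2 hy.2)] at hξpos
  linarith [(hsub hy).2.2]

lemma nonneg_of_deriv_deriv_le_mul {u u' u'' c : ℝ → ℝ} {a b : ℝ} (hab : a < b)
    (hu : ∀ x ∈ Icc a b, HasDerivWithinAt u (u' x) (Icc a b) x)
    (hu' : ∀ x ∈ Ioo a b, HasDerivAt u' (u'' x) x)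
    (hc : ∀ x ∈ Ioo a b, 0 < c x) (hle : ∀ x ∈ Ioo a b, u'' x ≤ c x * u x)
    (hua : u' a < 0) (hub : 0 ≤ u b) : ∀ x ∈ Icc a b, 0 ≤ u x := by
  obtain ⟨m, hm, hmin⟩ := isCompact_Icc.exists_isMinOn (nonempty_Icc.2 hab.le)
    fun x hx => (hu x hx).continuousWithinAt
  suffices 0 ≤ u m from fun x hx => this.trans (hmin hx)
  by_contra! hneg
  rcases hm.1.eq_or_lt with rfl | hma
  · exact hua.not_ge (hmin.localize.hasDerivWithinAt_Icc_left_nonneg hab (hu _ hm))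
  rcases hm.2.eq_or_lt with rfl | hmb
  · exact hneg.not_ge hub
  have hm' : m ∈ Ioo a b := ⟨hma, hmb⟩
  have hu''m := (hmin.isLocalMin (Icc_mem_nhds hma hmb)).nonneg_of_hasDerivAt_deriv
    (eventually_of_mem (Ioo_mem_nhds hma hmb) fun x hx =>
      hasDerivAt_of_forall_hasDerivWithinAt_Icc hu hx) (hu' m hm')
  nlinarith [hle m hm', hc m hm']

lemma neg_sqrt_mul_le_deriv_of_even {c p lam L : ℝ} {v v' v'' : ℝ → ℝ} (hc : 0 ≤ c)
    (hlam : 0 ≤ lam) (hL0 : 0 < L) (hL1 : L < 1)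
    (hv1 : ∀ x ∈ Icc (-1 : ℝ) 1, HasDerivWithinAt v (v' x) (Icc (-1 : ℝ) 1) x)
    (hv2 : ∀ x ∈ Icc (-1 : ℝ) 1, HasDerivWithinAt v' (v'' x) (Icc (-1 : ℝ) 1) x)
    (heven : ∀ x ∈ Icc (-1 : ℝ) 1, v (-x) = v x) (hpos : ∀ x ∈ Icc (-1 : ℝ) 1, 0 ≤ v x)
    (hnorm : ∫ x in Ioo (-1 : ℝ) 1, v x ^ 2 ≤ 1)
    (hode : ∀ x ∈ Ioo (-1 : ℝ) 1, -v'' x + (c * |x| ^ p - lam) * v x = 0) :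
    -√L * lam ≤ v' L := by
  have hsub : Icc 0 L ⊆ Icc (-1) 1 := Icc_subset_Icc (by norm_num) hL1.le
  have hIoo : Ioo 0 L ⊆ Ioo (-1) 1 := Ioo_subset_Ioo (by norm_num) hL1.le
  have h0 : v' 0 = 0 :=
    (hasDerivAt_of_forall_hasDerivWithinAt_Icc hv1 (by norm_num)).eq_zero_of_even
      (eventually_of_mem (Icc_mem_nhds (by norm_num) (by norm_num)) heven)
  have hge : ∀ x ∈ Ioo 0 L, -lam * v x ≤ v'' x := fun x hx => by
    have hpot : 0 ≤ c * |x| ^ p * v x := by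
      have := hpos x (Ioo_subset_Icc_self (hIoo hx)); positivity
    linarith [hode x (hIoo hx)]
  have hsq : ∫ x in 0..L, v x ^ 2 ≤ 1 := by
    rw [intervalIntegral.integral_of_le hL0.le, integral_Ioc_eq_integral_Ioo]
    refine le_trans (setIntegral_mono_set ?_ (ae_of_all _ fun _ => sq_nonneg _)
      hIoo.eventuallyLE) hnorm
    exact (((HasDerivWithinAt.continuousOn hv1).pow 2).integrableOn_Icc).mono_set
      Ioo_subset_Icc_self
  exact neg_sqrt_mul_le_of_deriv_ge hL0 hlam ((HasDerivWithinAt.continuousOn hv1).mono hsub)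
    ((HasDerivWithinAt.continuousOn hv2).mono hsub)
    (fun x hx => hasDerivAt_of_forall_hasDerivWithinAt_Icc hv2 (hIoo hx)) h0 hge hsq

lemma setIntegral_sq_le_of_le {f g : ℝ → ℝ} {a b : ℝ} (hf : ContinuousOn f (Icc a b))
    (hg : ContinuousOn g (Icc a b)) (hf0 : ∀ x ∈ Icc a b, 0 ≤ f x)
    (hfg : ∀ x ∈ Icc a b, f x ≤ g x) : ∫ x in Ioo a b, f x ^ 2 ≤ ∫ x in Ioo a b, g x ^ 2 :=
  setIntegral_mono_on ((hf.pow 2).integrableOn_Icc.mono_set Ioo_subset_Icc_self)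
    ((hg.pow 2).integrableOn_Icc.mono_set Ioo_subset_Icc_self) measurableSet_Ioo
    fun x hx => pow_le_pow_left₀ (hf0 x (Ioo_subset_Icc_self hx))
      (hfg x (Ioo_subset_Icc_self hx)) 2

theorem eigenfunction_comparison_general
    (γ : ℝ) (hγ : 1 ≤ γ) (n : ℕ) (hn : 1 ≤ n) (lam : ℝ) (hlam : 0 < lam)
    (x₀ : ℝ) (hx₀ : x₀ = (lam / ((n : ℝ) * Real.pi) ^ 2) ^ (1 / (2 * γ)))
    (a b : ℝ) (hab : a < b) (hb : b ≤ 1) (hx₀a : x₀ ≤ a)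
    (v v' v'' : ℝ → ℝ)
    (hv1 : ∀ x ∈ Set.Icc (-1 : ℝ) 1, HasDerivWithinAt v (v' x) (Set.Icc (-1 : ℝ) 1) x)
    (hv2 : ∀ x ∈ Set.Icc (-1 : ℝ) 1, HasDerivWithinAt v' (v'' x) (Set.Icc (-1 : ℝ) 1) x)
    (heven : ∀ x ∈ Set.Icc (-1 : ℝ) 1, v (-x) = v x)
    (hpos : ∀ x ∈ Set.Icc (-1 : ℝ) 1, 0 ≤ v x)
    (hbd : v 1 = 0)
    (hnorm : ∫ x in Set.Ioo (-1 : ℝ) 1, (v x) ^ 2 = 1)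
    (hode : ∀ x ∈ Set.Ioo (-1 : ℝ) 1,
      -v'' x + (((n : ℝ) * Real.pi) ^ 2 * |x| ^ (2 * γ) - lam) * v x = 0)
    (W W' W'' : ℝ → ℝ)
    (hW1 : ∀ x ∈ Set.Icc x₀ 1, HasDerivWithinAt W (W' x) (Set.Icc x₀ 1) x)
    (hW2 : ∀ x ∈ Set.Icc x₀ 1, HasDerivWithinAt W' (W'' x) (Set.Icc x₀ 1) x)
    (hWsuper : ∀ x ∈ Set.Ioo x₀ 1,
      0 ≤ -W'' x + (((n : ℝ) * Real.pi) ^ 2 * x ^ (2 * γ) - lam) * W x)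
    (hW1pos : 0 ≤ W 1)
    (hW'x₀ : W' x₀ < -Real.sqrt x₀ * lam) :
    (∫ x in Set.Ioo a b, (v x) ^ 2) ≤ ∫ x in Set.Ioo a b, (W x) ^ 2 := by
  have hnπ : 0 < ((n : ℝ) * Real.pi) ^ 2 := by
    have : (0 : ℝ) < n := by exact_mod_cast hn
    positivity
  have hx₀pos : 0 < x₀ := hx₀ ▸ by positivity
  have hx₀1 : x₀ < 1 := by linarith
  have hsub : Icc x₀ 1 ⊆ Icc (-1) 1 := Icc_subset_Icc (by linarith) le_rfl
  have hv'x₀ := neg_sqrt_mul_le_deriv_of_even hnπ.le hlam.le hx₀pos hx₀1 hv1 hv2 heven hpos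
    hnorm.le hode
  have hvW : ∀ x ∈ Icc x₀ 1, 0 ≤ W x - v x := by
    refine nonneg_of_deriv_deriv_le_mul (u'' := fun x => W'' x - v'' x) hx₀1
      (fun x hx => (hW1 x hx).sub ((hv1 x (hsub hx)).mono hsub))
      (fun x hx => (hasDerivAt_of_forall_hasDerivWithinAt_Icc hW2 hx).sub
        (hasDerivAt_of_forall_hasDerivWithinAt_Icc hv2 ⟨by linarith [hx.1], hx.2⟩))
      (fun x hx => sub_pos.2 (lt_mul_rpow_of_rpow_one_div_lt hnπ (by linarith) hlam.le
        (hx₀ ▸ hx.1))) (fun x hx => ?_) (by linarith) (by rwa [hbd, sub_zero])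
    have hv := hode x ⟨by linarith [hx.1], hx.2⟩
    rw [abs_of_pos (hx₀pos.trans hx.1)] at hv
    linarith [hWsuper x hx]
  have hab' : Icc a b ⊆ Icc x₀ 1 := Icc_subset_Icc hx₀a hb
  exact setIntegral_sq_le_of_le ((HasDerivWithinAt.continuousOn hv1).mono (hab'.trans hsub))
    ((HasDerivWithinAt.continuousOn hW1).mono hab') (fun x hx => hpos x (hsub (hab' hx)))
    fun x hx => sub_nonneg.1 (hvW x (hab' hx))

/-- Comparison lemma: the normalized nonnegative even first eigenfunction `v` of
`-v'' + (nπ)² |x|^(2γ) v = λ v` is dominated on `(a,b)` by any supersolution `W`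
on `[x₀,1]` with `W(1) ≥ 0` and `W'(x₀) < -√x₀ · λ`, where
`x₀ = (λ/(nπ)²)^(1/(2γ))`. -/
theorem eigenfunction_comparison
    (γ : ℝ) (hγ : 1 ≤ γ) (n : ℕ) (hn : 1 ≤ n) (lam : ℝ) (hlam : 0 < lam)
    (x₀ : ℝ) (hx₀ : x₀ = (lam / ((n : ℝ) * Real.pi) ^ 2) ^ (1 / (2 * γ)))
    (a b : ℝ) (ha : 0 < a) (hab : a < b) (hb : b ≤ 1) (hx₀a : x₀ ≤ a)
    (v v' v'' : ℝ → ℝ)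
    (hv1 : ∀ x ∈ Set.Icc (-1 : ℝ) 1, HasDerivWithinAt v (v' x) (Set.Icc (-1 : ℝ) 1) x)
    (hv2 : ∀ x ∈ Set.Icc (-1 : ℝ) 1, HasDerivWithinAt v' (v'' x) (Set.Icc (-1 : ℝ) 1) x)
    (hv3 : ContinuousOn v'' (Set.Icc (-1 : ℝ) 1))
    (heven : ∀ x ∈ Set.Icc (-1 : ℝ) 1, v (-x) = v x)
    (hpos : ∀ x ∈ Set.Icc (-1 : ℝ) 1, 0 ≤ v x)
    (hbd : v 1 = 0)
    (hnorm : ∫ x in Set.Ioo (-1 : ℝ) 1, (v x) ^ 2 = 1)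
    (hode : ∀ x ∈ Set.Ioo (-1 : ℝ) 1,
      -v'' x + (((n : ℝ) * Real.pi) ^ 2 * |x| ^ (2 * γ) - lam) * v x = 0)
    (W W' W'' : ℝ → ℝ)
    (hW1 : ∀ x ∈ Set.Icc x₀ 1, HasDerivWithinAt W (W' x) (Set.Icc x₀ 1) x)
    (hW2 : ∀ x ∈ Set.Icc x₀ 1, HasDerivWithinAt W' (W'' x) (Set.Icc x₀ 1) x)
    (hW3 : ContinuousOn W'' (Set.Icc x₀ 1))
    (hWsuper : ∀ x ∈ Set.Ioo x₀ 1,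
      0 ≤ -W'' x + (((n : ℝ) * Real.pi) ^ 2 * x ^ (2 * γ) - lam) * W x)
    (hW1pos : 0 ≤ W 1)
    (hW'x₀ : W' x₀ < -Real.sqrt x₀ * lam) :
    (∫ x in Set.Ioo a b, (v x) ^ 2) ≤ ∫ x in Set.Ioo a b, (W x) ^ 2 :=
  eigenfunction_comparison_general γ hγ n hn lam hlam x₀ hx₀ a b hab hb hx₀a v v' v'' hv1 hv2 heven
    hpos hbd hnorm hode W W' W'' hW1 hW2 hWsuper hW1pos hW'x₀
end

section
/- Let γ ≥ 1, let n ≥ 1 be an integer, let λ > 0, set x₀ := (λ/(nπ)²)^{1/(2γ)} and assume x₀ ≤ 1. Set μ := min{ nπ/(γ+1), (γ/(γ+1)) · ((nπ)²/λ)^{(γ+1)/(2γ)} }, let C > 0, and define W(x) := C · e^{−μ x^{γ+1}}. Then for every x ∈ [x₀,1], −W″(x) + ((nπ)² x^{2γ} − λ) W(x) ≥ 0; equivalently, ((nπ)² − μ²(γ+1)²) x^{2γ} + μ γ (γ+1) x^{γ−1} ≥ λ for all x ∈ [x₀,1]. -/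
open MeasureTheory Set

lemma hasDerivAt_exp_rpow (μ γ x : ℝ) (hx : 0 < x) :
    HasDerivAt (fun y : ℝ => Real.exp (-μ * y ^ (γ+1)))
      (Real.exp (-μ * x ^ (γ+1)) * (-μ * ((γ+1) * x ^ γ))) x := by
  have h1 := Real.hasDerivAt_rpow_const (x := x) (p := γ+1) (Or.inl hx.ne')
  rw [show γ + 1 - 1 = γ from by ring] at h1
  exact (h1.const_mul (-μ)).exp

/-- The explicit function `W(x) = C e^{-μ x^(γ+1)}`, with
`μ = min( nπ/(γ+1), (γ/(γ+1)) ((nπ)²/λ)^((γ+1)/(2γ)) )`, is a supersolution of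
`-W'' + ((nπ)² x^(2γ) - λ) W ≥ 0` on `[x₀,1]`; equivalently,
`((nπ)² - μ²(γ+1)²) x^(2γ) + μγ(γ+1) x^(γ-1) ≥ λ` there. -/
theorem explicit_supersolution
    (γ : ℝ) (hγ : 1 ≤ γ) (n : ℕ) (hn : 1 ≤ n) (lam : ℝ) (hlam : 0 < lam)
    (x₀ : ℝ) (hx₀ : x₀ = (lam / ((n : ℝ) * Real.pi) ^ 2) ^ (1 / (2 * γ)))
    (hx₀1 : x₀ ≤ 1)
    (μ : ℝ) (hμ : μ = min ((n : ℝ) * Real.pi / (γ + 1))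
      ((γ / (γ + 1)) * (((n : ℝ) * Real.pi) ^ 2 / lam) ^ ((γ + 1) / (2 * γ))))
    (C : ℝ) (hC : 0 < C)
    (W : ℝ → ℝ) (hW : W = fun x => C * Real.exp (-μ * x ^ (γ + 1))) :
    ∀ x ∈ Set.Icc x₀ 1,
      (0 ≤ -deriv (deriv W) x + (((n : ℝ) * Real.pi) ^ 2 * x ^ (2 * γ) - lam) * W x) ∧
      (((n : ℝ) * Real.pi) ^ 2 - μ ^ 2 * (γ + 1) ^ 2) * x ^ (2 * γ)
          + μ * γ * (γ + 1) * x ^ (γ - 1) ≥ lam := by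
  have hγ0 : (0:ℝ) < γ := lt_of_lt_of_le one_pos hγ
  have hγ1 : (0:ℝ) < γ + 1 := by linarith
  have hγne : (2: ℝ) * γ ≠ 0 := by positivity
  have hn1 : (1:ℝ) ≤ (n:ℝ) := by exact_mod_cast hn
  have hnπ : 0 < (n : ℝ) * Real.pi := mul_pos (by linarith) Real.pi_pos
  have hbase : 0 < lam / ((n : ℝ) * Real.pi) ^ 2 := div_pos hlam (by positivity)
  have hx0pos : 0 < x₀ := by rw [hx₀]; exact Real.rpow_pos_of_pos hbase _
  have hμ1 : μ ≤ (n : ℝ) * Real.pi / (γ + 1) := hμ ▸ min_le_left _ _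
  have hμpos : 0 < μ := by
    rw [hμ]
    exact lt_min (div_pos hnπ hγ1)
      (mul_pos (div_pos hγ0 hγ1) (Real.rpow_pos_of_pos (div_pos (by positivity) hlam) _))
  -- x₀ ^ (2γ) = lam / (nπ)²
  have hx2γ : x₀ ^ (2 * γ) = lam / ((n : ℝ) * Real.pi) ^ 2 := by
    rw [hx₀, ← Real.rpow_mul hbase.le,
      show 1 / (2 * γ) * (2 * γ) = 1 from by field_simp, Real.rpow_one]
  have hxγ1 : x₀ ^ (γ + 1) = (lam / ((n : ℝ) * Real.pi) ^ 2) ^ ((γ + 1) / (2 * γ)) := by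
    rw [hx₀, ← Real.rpow_mul hbase.le]
    congr 1
    field_simp
  -- the second branch of the min equals γ / ((γ+1) x₀^(γ+1))
  have hxγ1pos : 0 < x₀ ^ (γ + 1) := Real.rpow_pos_of_pos hx0pos _
  have hμ2 : μ ≤ γ / ((γ + 1) * x₀ ^ (γ + 1)) := by
    have h2 : ((n : ℝ) * Real.pi) ^ 2 / lam = (lam / ((n : ℝ) * Real.pi) ^ 2)⁻¹ := by
      rw [inv_div]
    have : (((n : ℝ) * Real.pi) ^ 2 / lam) ^ ((γ + 1) / (2 * γ))
        = (x₀ ^ (γ + 1))⁻¹ := by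
      rw [h2, Real.inv_rpow hbase.le, hxγ1]
    calc μ ≤ (γ / (γ + 1)) * (((n : ℝ) * Real.pi) ^ 2 / lam) ^ ((γ + 1) / (2 * γ)) :=
          hμ ▸ min_le_right _ _
      _ = γ / ((γ + 1) * x₀ ^ (γ + 1)) := by
          rw [this]; field_simp
  have hkey : μ * ((γ + 1) * x₀ ^ (γ + 1)) ≤ γ :=
    (le_div_iff₀ (by positivity)).mp hμ2
  have hμγ1 : μ * (γ + 1) ≤ (n : ℝ) * Real.pi :=
    (le_div_iff₀ hγ1).mp hμ1
  have hA : 0 ≤ ((n : ℝ) * Real.pi) ^ 2 - μ ^ 2 * (γ + 1) ^ 2 := by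
    nlinarith [mul_self_le_mul_self (by positivity : (0:ℝ) ≤ μ * (γ + 1)) hμγ1]
  have hlamx0 : lam = ((n : ℝ) * Real.pi) ^ 2 * x₀ ^ (2 * γ) := by
    rw [hx2γ]; field_simp
  have hsplit : x₀ ^ (2 * γ) = x₀ ^ (γ + 1) * x₀ ^ (γ - 1) := by
    rw [← Real.rpow_add hx0pos]; ring_nf
  have hxγm1pos : 0 < x₀ ^ (γ - 1) := Real.rpow_pos_of_pos hx0pos _
  -- the key inequality at x₀
  have hkey0 : lam ≤ (((n : ℝ) * Real.pi) ^ 2 - μ ^ 2 * (γ + 1) ^ 2) * x₀ ^ (2 * γ)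
      + μ * γ * (γ + 1) * x₀ ^ (γ - 1) := by
    nlinarith [hkey, hxγm1pos.le, hμpos.le, hγ1.le, hxγ1pos.le,
      mul_le_mul_of_nonneg_right hkey (mul_nonneg (mul_nonneg hμpos.le hγ1.le) hxγm1pos.le)]
  intro x hx
  obtain ⟨hxl, hxr⟩ := hx
  have hxpos : 0 < x := lt_of_lt_of_le hx0pos hxl
  have hm1 : x₀ ^ (2 * γ) ≤ x ^ (2 * γ) :=
    Real.rpow_le_rpow hx0pos.le hxl (by positivity)
  have hm2 : x₀ ^ (γ - 1) ≤ x ^ (γ - 1) :=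
    Real.rpow_le_rpow hx0pos.le hxl (by linarith)
  have part2 : (((n : ℝ) * Real.pi) ^ 2 - μ ^ 2 * (γ + 1) ^ 2) * x ^ (2 * γ)
      + μ * γ * (γ + 1) * x ^ (γ - 1) ≥ lam := by
    have h1 := mul_le_mul_of_nonneg_left hm1 hA
    have h2 := mul_le_mul_of_nonneg_left hm2
      (by positivity : (0:ℝ) ≤ μ * γ * (γ + 1))
    linarith
  refine ⟨?_, part2⟩
  -- derivative computation
  have hW' : ∀ y : ℝ, 0 < y → HasDerivAt W
      (C * (Real.exp (-μ * y ^ (γ+1)) * (-μ * ((γ+1) * y ^ γ)))) y := by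
    intro y hy
    rw [hW]
    exact (hasDerivAt_exp_rpow μ γ y hy).const_mul C
  have hEvent : deriv W =ᶠ[nhds x]
      fun y => C * (Real.exp (-μ * y ^ (γ+1)) * (-μ * ((γ+1) * y ^ γ))) := by
    filter_upwards [Ioi_mem_nhds hxpos] with y hy
    exact (hW' y hy).deriv
  have hE : HasDerivAt (fun y : ℝ => Real.exp (-μ * y ^ (γ+1)))
      (Real.exp (-μ * x ^ (γ+1)) * (-μ * ((γ+1) * x ^ γ))) x :=
    hasDerivAt_exp_rpow μ γ x hxpos
  have hg : HasDerivAt (fun y : ℝ => -μ * ((γ+1) * y ^ γ))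
      (-μ * ((γ+1) * (γ * x ^ (γ - 1)))) x :=
    ((Real.hasDerivAt_rpow_const (x := x) (p := γ) (Or.inl hxpos.ne')).const_mul
      (γ+1)).const_mul (-μ)
  have hG : HasDerivAt
      (fun y => C * (Real.exp (-μ * y ^ (γ+1)) * (-μ * ((γ+1) * y ^ γ))))
      (C * ((Real.exp (-μ * x ^ (γ+1)) * (-μ * ((γ+1) * x ^ γ))) * (-μ * ((γ+1) * x ^ γ))
        + Real.exp (-μ * x ^ (γ+1)) * (-μ * ((γ+1) * (γ * x ^ (γ - 1)))))) x :=
    (hE.mul hg).const_mul C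
  have hdd : deriv (deriv W) x
      = C * ((Real.exp (-μ * x ^ (γ+1)) * (-μ * ((γ+1) * x ^ γ))) * (-μ * ((γ+1) * x ^ γ))
        + Real.exp (-μ * x ^ (γ+1)) * (-μ * ((γ+1) * (γ * x ^ (γ - 1))))) := by
    rw [hEvent.deriv_eq]
    exact hG.deriv
  have hxx : x ^ γ * x ^ γ = x ^ (2 * γ) := by
    rw [← Real.rpow_add hxpos]; ring_nf
  have hWx : W x = C * Real.exp (-μ * x ^ (γ+1)) := by rw [hW]
  have hEpos : 0 < C * Real.exp (-μ * x ^ (γ+1)) := by positivity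
  rw [hdd, hWx]
  have hfac : -(C * ((Real.exp (-μ * x ^ (γ+1)) * (-μ * ((γ+1) * x ^ γ))) * (-μ * ((γ+1) * x ^ γ))
        + Real.exp (-μ * x ^ (γ+1)) * (-μ * ((γ+1) * (γ * x ^ (γ - 1))))))
      + (((n : ℝ) * Real.pi) ^ 2 * x ^ (2 * γ) - lam) * (C * Real.exp (-μ * x ^ (γ+1)))
      = (C * Real.exp (-μ * x ^ (γ+1)))
        * ((((n : ℝ) * Real.pi) ^ 2 - μ ^ 2 * (γ + 1) ^ 2) * x ^ (2 * γ)
          + μ * γ * (γ + 1) * x ^ (γ - 1) - lam) := by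
    rw [← hxx]; ring
  rw [hfac]
  exact mul_nonneg hEpos.le (by linarith [part2])
end
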